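/- (Theorem 3.3) For every integer N ≥ 3, the matrix P_sk is invertible. -/

import Mathlib

/-!
Write `P_sk = C • 1 - σ • (e₁ • S + e₂ • Sᵀ)` with `S = sk(G_β)`, `C = h^β c₀ > 0` and `σ > 0`.
Since `xᵀ Sᵀ x = xᵀ S x`, we get `xᵀ P_sk x = C ‖x‖² - σ (e₁ + e₂) xᵀ S x`, so it suffices to show
`xᵀ S x ≤ 0`: then `xᵀ P_sk x > 0` for `x ≠ 0` and `P_sk` has trivial kernel.

For a skew-circulant `S = ∑ c_d Zᵈ`, with `Z` the skew-cyclic shift (`Zⁿ = -1`), the form is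
`xᵀ S x = ∑ c_d ⟪x, Zᵈ x⟫`, where `⟪x, Z⁻ᵈ x⟫ = -⟪x, Zᵈ x⟫` for `d ≠ 0` and `⟪x, Zᵈ x⟫ ≤ ‖x‖²`.
Hence the form does not change when the entry `-ω₀` at position `-1` of the column
`(ω₁, ω₂, …, ω_{n-1}, -ω₀)` is moved to `+ω₀` at position `1`. The new column is nonnegative
away from position `0`, because `ω₀ + ω₂ ≥ 0` and `ω_k > 0` for `k ≥ 3`, so
`xᵀ S x ≤ (∑_{k<n} ω_k) ‖x‖² ≤ 0` (for `n = 2` the bound is `ω₁ ‖x‖² ≤ 0`).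
-/

open scoped Matrix

/-- The coefficients `g_k^{(β)}`. -/
noncomputable def gcoef (β : ℝ) : ℕ → ℝ
  | 0 => 1
  | k + 1 => (1 - (β + 1) / ((k : ℝ) + 1)) * gcoef β k

/-- The WSGD coefficients `ω_k^{(β)}`. -/
noncomputable def w (β : ℝ) : ℕ → ℝ
  | 0 => β / 2 * gcoef β 0
  | k + 1 => β / 2 * gcoef β (k + 1) + (2 - β) / 2 * gcoef β k
/-- The `(N−1) × (N−1)` lower Hessenberg Toeplitz matrix `G_β`
(1-based entry `(i,j)` equals `ω_{i−j+1}` when `i − j + 1 ≥ 0`, else `0`). -/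
noncomputable def Gmat (β : ℝ) (N : ℕ) : Matrix (Fin (N - 1)) (Fin (N - 1)) ℝ :=
  Matrix.of fun i j => if (j : ℕ) ≤ (i : ℕ) + 1 then w β ((i : ℕ) + 1 - (j : ℕ)) else 0

/-- `K_N = e₁·G_β + e₂·G_βᵀ`. -/
noncomputable def Kmat (β e1 e2 : ℝ) (N : ℕ) : Matrix (Fin (N - 1)) (Fin (N - 1)) ℝ :=
  e1 • Gmat β N + e2 • (Gmat β N)ᵀ
/-- `c_0^{(α,σ)} = τ^{−α}·σ^{1−α}/Γ(2−α)` with `σ = 1 − α/2`. -/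
noncomputable def c0 (α τ : ℝ) : ℝ :=
  τ ^ (-α) * (1 - α / 2) ^ (1 - α) / Real.Gamma (2 - α)

/-- `A_0 = h^β·c_0^{(α,σ)}·I − σ·K_N` with `σ = 1 − α/2`. -/
noncomputable def A0mat (β α h τ e1 e2 : ℝ) (N : ℕ) :
    Matrix (Fin (N - 1)) (Fin (N - 1)) ℝ :=
  (h ^ β * c0 α τ) • (1 : Matrix (Fin (N - 1)) (Fin (N - 1)) ℝ) -
    (1 - α / 2) • Kmat β e1 e2 N
/-- The skew-circulant matrix `sk(G_β)` with first column
`(ω_1, ω_2, …, ω_{N−2}, −ω_0)ᵀ`. -/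
noncomputable def skG (β : ℝ) (N : ℕ) : Matrix (Fin (N - 1)) (Fin (N - 1)) ℝ :=
  Matrix.of fun i j =>
    if (j : ℕ) ≤ (i : ℕ) then
      (if (i : ℕ) - (j : ℕ) = N - 2 then -(w β 0) else w β ((i : ℕ) - (j : ℕ) + 1))
    else
      -(if N - 1 - ((j : ℕ) - (i : ℕ)) = N - 2 then -(w β 0)
        else w β (N - 1 - ((j : ℕ) - (i : ℕ)) + 1))

/-- `sk(K_N) = e₁·sk(G_β) + e₂·sk(G_β)ᵀ`. -/
noncomputable def skK (β e1 e2 : ℝ) (N : ℕ) : Matrix (Fin (N - 1)) (Fin (N - 1)) ℝ :=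
  e1 • skG β N + e2 • (skG β N)ᵀ

/-- The skew-circulant preconditioner `P_sk = h^β·c_0^{(α,σ)}·I − σ·sk(K_N)`. -/
noncomputable def Psk (β α h τ e1 e2 : ℝ) (N : ℕ) :
    Matrix (Fin (N - 1)) (Fin (N - 1)) ℝ :=
  (h ^ β * c0 α τ) • (1 : Matrix (Fin (N - 1)) (Fin (N - 1)) ℝ) -
    (1 - α / 2) • skK β e1 e2 N

theorem Fin.sub_le_self_iff {n : ℕ} {i d : Fin n} : i - d ≤ i ↔ d ≤ i := by
  have := i.isLt
  rcases le_or_gt d i with h | h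
  · simp only [h, iff_true, Fin.le_def, Fin.coe_sub_iff_le.2 h]; omega
  · simp only [Fin.le_def, Fin.coe_sub_iff_lt.2 h]; omega

theorem Fin.neg_le_sub_iff {n : ℕ} [NeZero n] {i d : Fin n} (hd : d ≠ 0) : -d ≤ i - d ↔ i < d := by
  have hd' : (d : ℕ) ≠ 0 := Fin.val_ne_zero_iff.2 hd
  have hneg : ((-d : Fin n) : ℕ) = n - d := by
    rw [Fin.val_neg', Nat.mod_eq_of_lt (by omega)]
  have := i.isLt
  rcases le_or_gt d i with h | h
  · simp only [Fin.le_def, Fin.lt_def, hneg, Fin.coe_sub_iff_le.2 h]; omega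
  · simp only [Fin.le_def, Fin.lt_def, hneg, Fin.coe_sub_iff_lt.2 h]; omega

namespace Matrix

theorem isUnit_of_dotProduct_mulVec_pos {K m : Type*} [Field K] [Preorder K] [Fintype m]
    [DecidableEq m] {A : Matrix m m K} (hA : ∀ x ≠ 0, 0 < x ⬝ᵥ A *ᵥ x) : IsUnit A := by
  rw [isUnit_iff_isUnit_det, isUnit_iff_ne_zero, ne_eq, ← exists_mulVec_eq_zero_iff]
  rintro ⟨x, hx, hAx⟩
  simpa [hAx] using hA x hx

variable {R : Type*} {n : ℕ}

def skewCirculant [Neg R] (c : Fin n → R) : Matrix (Fin n) (Fin n) R :=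
  of fun i j => if j ≤ i then c (i - j) else -c (i - j)

/-- `skewShiftInner d x = ⟪x, Zᵈ x⟫` for the skew-cyclic shift `Z`, which sends `eᵢ` to `eᵢ₊₁`
and `e_{n-1}` to `-e₀`. -/
def skewShiftInner [Ring R] (d : Fin n) (x : Fin n → R) : R :=
  ∑ i, (if d ≤ i then x i else -x i) * x (i - d)

variable [NeZero n]

theorem dotProduct_skewCirculant_mulVec [CommRing R] (c x : Fin n → R) :
    x ⬝ᵥ skewCirculant c *ᵥ x = ∑ d, c d * skewShiftInner d x := by
  have hrow (i : Fin n) : x i * (skewCirculant c *ᵥ x) i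
      = ∑ d, c d * ((if d ≤ i then x i else -x i) * x (i - d)) := by
    rw [mulVec, dotProduct, Finset.mul_sum, ← (Equiv.subLeft i).sum_comp]
    refine Finset.sum_congr rfl fun d _ => ?_
    simp only [skewCirculant, of_apply, Equiv.subLeft_apply, sub_sub_cancel, Fin.sub_le_self_iff]
    split_ifs <;> ring
  simp only [dotProduct, hrow, skewShiftInner, Finset.mul_sum]
  exact Finset.sum_comm

theorem skewShiftInner_zero [Ring R] (x : Fin n → R) :
    skewShiftInner 0 x = x ⬝ᵥ x := by
  simp [skewShiftInner, dotProduct]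

theorem skewShiftInner_neg [CommRing R] {d : Fin n} (hd : d ≠ 0) (x : Fin n → R) :
    skewShiftInner (-d) x = -skewShiftInner d x := by
  rw [skewShiftInner, skewShiftInner, ← Finset.sum_neg_distrib, ← (Equiv.subRight d).sum_comp]
  refine Finset.sum_congr rfl fun i _ => ?_
  simp only [Equiv.subRight_apply, sub_neg_eq_add, sub_add_cancel, Fin.neg_le_sub_iff hd]
  by_cases h : i < d
  · simp [h, not_le.2 h, mul_comm]
  · simp [h, not_lt.1 h, mul_comm]

section OrderedField

variable [Field R] [LinearOrder R] [IsStrictOrderedRing R]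

theorem skewShiftInner_le (d : Fin n) (x : Fin n → R) : skewShiftInner d x ≤ x ⬝ᵥ x := by
  have hshift : ∑ i, x (i - d) ^ 2 = ∑ i, x i ^ 2 := (Equiv.subRight d).sum_comp (fun i => x i ^ 2)
  have hterm (i : Fin n) : (if d ≤ i then x i else -x i) * x (i - d)
      ≤ (x i ^ 2 + x (i - d) ^ 2) / 2 := by
    split_ifs
    · nlinarith [sq_nonneg (x i - x (i - d))]
    · nlinarith [sq_nonneg (x i + x (i - d))]
  calc skewShiftInner d x ≤ ∑ i, (x i ^ 2 + x (i - d) ^ 2) / 2 :=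
        Finset.sum_le_sum fun i _ => hterm i
    _ = x ⬝ᵥ x := by
      rw [← Finset.sum_div, Finset.sum_add_distrib, hshift, dotProduct]
      simp only [sq]; ring

theorem sum_mul_skewShiftInner_eq_zero {e : Fin n → R} (he0 : e 0 = 0)
    (heven : ∀ d, e (-d) = e d) (x : Fin n → R) : ∑ d, e d * skewShiftInner d x = 0 := by
  have hanti : ∑ d, e d * skewShiftInner d x = -∑ d, e d * skewShiftInner d x := by
    rw [← Finset.sum_neg_distrib, ← Equiv.sum_comp (Equiv.neg (Fin n))]
    refine Finset.sum_congr rfl fun d _ => ?_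
    by_cases hd : d = 0
    · simp [hd, he0]
    · simp [heven, skewShiftInner_neg hd]
  linarith

theorem sum_mul_skewShiftInner_le {c : Fin n → R} (hc : ∀ d ≠ 0, 0 ≤ c d) (x : Fin n → R) :
    ∑ d, c d * skewShiftInner d x ≤ (∑ d, c d) * (x ⬝ᵥ x) := by
  rw [Finset.sum_mul]
  refine Finset.sum_le_sum fun d _ => ?_
  by_cases hd : d = 0
  · rw [hd, skewShiftInner_zero]
  · exact mul_le_mul_of_nonneg_left (skewShiftInner_le d x) (hc d hd)

/-- Only the odd part `d ↦ c d - c (-d)` of the column enters the quadratic form, which is why an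
even `e` with `e 0 = 0` may be subtracted. -/
theorem dotProduct_skewCirculant_mulVec_le (c e : Fin n → R) (he0 : e 0 = 0)
    (heven : ∀ d, e (-d) = e d) (hec : ∀ d ≠ 0, e d ≤ c d) (x : Fin n → R) :
    x ⬝ᵥ skewCirculant c *ᵥ x ≤ (∑ d, (c d - e d)) * (x ⬝ᵥ x) := by
  calc x ⬝ᵥ skewCirculant c *ᵥ x
      = ∑ d, (c d - e d) * skewShiftInner d x + ∑ d, e d * skewShiftInner d x := by
        rw [dotProduct_skewCirculant_mulVec, ← Finset.sum_add_distrib]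
        simp only [sub_mul, sub_add_cancel]
    _ ≤ (∑ d, (c d - e d)) * (x ⬝ᵥ x) := by
        rw [sum_mul_skewShiftInner_eq_zero he0 heven, add_zero]
        exact sum_mul_skewShiftInner_le (fun d hd => sub_nonneg.2 (hec d hd)) x

end OrderedField

end Matrix

section WSGD

variable {β : ℝ}

theorem gcoef_one : gcoef β 1 = -β := by
  simp [gcoef]

theorem gcoef_two : gcoef β 2 = β * (β - 1) / 2 := by
  rw [gcoef, gcoef_one]; push_cast; ring

theorem gcoef_add_two_pos (hβ1 : 1 < β) (hβ2 : β < 2) (k : ℕ) : 0 < gcoef β (k + 2) := by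
  induction k with
  | zero => rw [gcoef_two]; nlinarith
  | succ k ih =>
    have hfactor : 0 < 1 - (β + 1) / ((↑(k + 2) : ℝ) + 1) := by
      rw [sub_pos, div_lt_one (by positivity)]; push_cast; linarith [k.cast_nonneg (α := ℝ)]
    rw [gcoef]; exact mul_pos hfactor ih

theorem gcoef_succ_eq_mul_gcoef_sub_one (m : ℕ) :
    gcoef β (m + 1) = -β / ((m : ℝ) + 1) * gcoef (β - 1) m := by
  induction m with
  | zero => simp [gcoef]
  | succ m ih =>
    rw [gcoef, ih, gcoef.eq_2 (β - 1)]
    push_cast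
    field_simp
    ring

theorem sum_range_gcoef (m : ℕ) : ∑ k ∈ Finset.range (m + 1), gcoef β k = gcoef (β - 1) m := by
  induction m with
  | zero => simp [gcoef]
  | succ m ih =>
    rw [Finset.sum_range_succ, ih, gcoef_succ_eq_mul_gcoef_sub_one, gcoef.eq_2 (β - 1)]
    field_simp
    ring

theorem gcoef_sub_one_succ_neg (hβ1 : 1 < β) (hβ2 : β < 2) (m : ℕ) :
    gcoef (β - 1) (m + 1) < 0 := by
  induction m with
  | zero => simp [gcoef]; linarith
  | succ m ih =>
    have hfactor : 0 < 1 - (β - 1 + 1) / ((↑(m + 1) : ℝ) + 1) := by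
      rw [sub_pos, div_lt_one (by positivity)]; push_cast; linarith [m.cast_nonneg (α := ℝ)]
    rw [gcoef]; exact mul_neg_of_pos_of_neg hfactor ih

theorem w_zero : w β 0 = β / 2 := by
  simp [w, gcoef]

theorem w_one_neg (hβ1 : 1 < β) : w β 1 < 0 := by
  simp only [w, gcoef]; nlinarith

theorem w_add_three_pos (hβ1 : 1 < β) (hβ2 : β < 2) (k : ℕ) : 0 < w β (k + 3) := by
  have h1 := gcoef_add_two_pos hβ1 hβ2 (k + 1)
  have h2 := gcoef_add_two_pos hβ1 hβ2 k
  rw [w]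
  nlinarith

theorem w_zero_add_w_two_nonneg (hβ : 1 ≤ β) : 0 ≤ w β 0 + w β 2 := by
  have h : w β 0 + w β 2 = β * (β - 1) * (β + 2) / 4 := by
    rw [w_zero, w, gcoef_two, gcoef_one]; ring
  rw [h]
  exact div_nonneg (mul_nonneg (mul_nonneg (by linarith) (by linarith)) (by linarith)) (by norm_num)

theorem sum_range_w (m : ℕ) : ∑ k ∈ Finset.range (m + 2), w β k
    = β / 2 * gcoef (β - 1) (m + 1) + (2 - β) / 2 * gcoef (β - 1) m := by
  rw [← sum_range_gcoef, ← sum_range_gcoef, Finset.sum_range_succ', Finset.mul_sum, Finset.mul_sum,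
    Finset.sum_range_succ' _ (m + 1)]
  simp only [w, Finset.sum_add_distrib, gcoef.eq_1]
  ring

theorem sum_range_w_nonpos (hβ1 : 1 < β) (hβ2 : β < 2) {n : ℕ} (hn : 3 ≤ n) :
    ∑ k ∈ Finset.range n, w β k ≤ 0 := by
  obtain ⟨m, rfl⟩ : ∃ m, n = m + 1 + 2 := ⟨n - 3, by omega⟩
  rw [sum_range_w]
  have h1 := gcoef_sub_one_succ_neg hβ1 hβ2 (m + 1)
  have h2 := gcoef_sub_one_succ_neg hβ1 hβ2 m
  nlinarith

end WSGD

noncomputable def wsgdSkewColumn (β : ℝ) (n : ℕ) (d : Fin n) : ℝ :=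
  if (d : ℕ) = n - 1 then -w β 0 else w β (d + 1)

theorem skG_eq_skewCirculant (β : ℝ) (N : ℕ) :
    skG β N = Matrix.skewCirculant (wsgdSkewColumn β (N - 1)) := by
  ext i j
  have hi := i.isLt
  simp only [skG, Matrix.skewCirculant, Matrix.of_apply, wsgdSkewColumn]
  rcases le_or_gt j i with h | h
  · rw [if_pos (Fin.le_def.1 h), if_pos h, Fin.coe_sub_iff_le.2 h, show N - 2 = N - 1 - 1 by omega]
  · rw [if_neg (Fin.lt_def.1 h).not_ge, if_neg h.not_ge, Fin.coe_sub_iff_lt.2 h,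
      show N - 1 - (j - i : ℕ) = N - 1 + i - j by omega, show N - 2 = N - 1 - 1 by omega]

noncomputable def wsgdEvenCorrection (β : ℝ) (n : ℕ) (d : Fin n) : ℝ :=
  if (d : ℕ) = 1 ∨ (d : ℕ) = n - 1 then -w β 0 else 0

section WSGDColumn

variable {β : ℝ} {n : ℕ} [NeZero n]

theorem wsgdEvenCorrection_zero (hn : 2 ≤ n) : wsgdEvenCorrection β n 0 = 0 := by
  rw [wsgdEvenCorrection, Fin.val_zero, if_neg (by omega)]

theorem wsgdEvenCorrection_neg (d : Fin n) :
    wsgdEvenCorrection β n (-d) = wsgdEvenCorrection β n d := by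
  rcases eq_or_ne d 0 with rfl | hd
  · rw [neg_zero]
  have hd' : (d : ℕ) ≠ 0 := Fin.val_ne_zero_iff.2 hd
  have hneg : ((-d : Fin n) : ℕ) = n - d := by
    rw [Fin.val_neg', Nat.mod_eq_of_lt (by omega)]
  have := d.isLt
  simp only [wsgdEvenCorrection, hneg]
  congr 1
  apply propext
  omega

theorem wsgdEvenCorrection_le (hβ1 : 1 < β) (hβ2 : β < 2) {d : Fin n} (hd : d ≠ 0) :
    wsgdEvenCorrection β n d ≤ wsgdSkewColumn β n d := by
  have hd' : (d : ℕ) ≠ 0 := Fin.val_ne_zero_iff.2 hd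
  simp only [wsgdEvenCorrection, wsgdSkewColumn]
  split_ifs with hcorr hlast
  · rfl
  · obtain hone : (d : ℕ) = 1 := by omega
    rw [hone]
    linarith [w_zero_add_w_two_nonneg hβ1.le (β := β)]
  · omega
  · obtain ⟨k, hk⟩ : ∃ k, (d : ℕ) + 1 = k + 3 := ⟨d - 2, by omega⟩
    rw [hk]
    exact (w_add_three_pos hβ1 hβ2 k).le

theorem sum_wsgdSkewColumn_sub_wsgdEvenCorrection_nonpos (hβ1 : 1 < β) (hβ2 : β < 2)
    (hn : 2 ≤ n) : ∑ d, (wsgdSkewColumn β n d - wsgdEvenCorrection β n d) ≤ 0 := by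
  obtain ⟨m, rfl⟩ : ∃ m, n = m + 1 := ⟨n - 1, by omega⟩
  have hterm (k : ℕ) (hk : k < m) :
      (if k = m + 1 - 1 then -w β 0 else w β (k + 1))
        - (if k = 1 ∨ k = m + 1 - 1 then -w β 0 else 0)
      = w β (k + 1) + if 1 = k then w β 0 else 0 := by
    simp only [Nat.add_sub_cancel, hk.ne, or_false, if_false, eq_comm (a := 1)]
    split_ifs <;> ring
  simp only [wsgdSkewColumn, wsgdEvenCorrection]
  rw [Fin.sum_univ_eq_sum_range (fun k => (if k = m + 1 - 1 then -w β 0 else w β (k + 1))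
      - (if k = 1 ∨ k = m + 1 - 1 then -w β 0 else 0)), Finset.sum_range_succ,
    Finset.sum_congr rfl fun k hk => hterm k (Finset.mem_range.1 hk), Finset.sum_add_distrib,
    Finset.sum_ite_eq]
  simp only [Nat.add_sub_cancel, or_true, if_true, sub_self, add_zero, Finset.mem_range]
  rcases eq_or_lt_of_le (show 1 ≤ m by omega) with rfl | hm
  · simpa using (w_one_neg hβ1).le
  · rw [if_pos hm, ← Finset.sum_range_succ' (w β)]
    exact sum_range_w_nonpos hβ1 hβ2 (by omega)

theorem dotProduct_skewCirculant_wsgdSkewColumn_nonpos (hβ1 : 1 < β) (hβ2 : β < 2)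
    (hn : 2 ≤ n) (x : Fin n → ℝ) :
    x ⬝ᵥ Matrix.skewCirculant (wsgdSkewColumn β n) *ᵥ x ≤ 0 :=
  (Matrix.dotProduct_skewCirculant_mulVec_le _ _ (wsgdEvenCorrection_zero hn)
    wsgdEvenCorrection_neg (fun _ hd => wsgdEvenCorrection_le hβ1 hβ2 hd) x).trans
    (mul_nonpos_of_nonpos_of_nonneg (sum_wsgdSkewColumn_sub_wsgdEvenCorrection_nonpos hβ1 hβ2 hn)
      (Finset.sum_nonneg fun i _ => mul_self_nonneg (x i)))

end WSGDColumn

theorem c0_pos {α τ : ℝ} (hα : α < 2) (hτ : 0 < τ) : 0 < c0 α τ := by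
  have hσ : 0 < 1 - α / 2 := by linarith
  have := Real.Gamma_pos_of_pos (show 0 < 2 - α by linarith)
  unfold c0
  positivity

theorem Psk_invertible_general (N : ℕ) (hN : 3 ≤ N)
    (β α h τ e1 e2 : ℝ) (hβ1 : 1 < β) (hβ2 : β < 2)
    (hα1 : α < 1) (hh : 0 < h) (hτ : 0 < τ)
    (he1 : 0 < e1) (he2 : 0 < e2) :
    IsUnit (Psk β α h τ e1 e2 N) := by
  have : NeZero (N - 1) := ⟨by omega⟩
  have hC : 0 < h ^ β * c0 α τ := mul_pos (Real.rpow_pos_of_pos hh β) (c0_pos (by linarith) hτ)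
  refine Matrix.isUnit_of_dotProduct_mulVec_pos fun x hx => ?_
  have hS : x ⬝ᵥ skG β N *ᵥ x ≤ 0 := skG_eq_skewCirculant β N ▸
    dotProduct_skewCirculant_wsgdSkewColumn_nonpos hβ1 hβ2 (by omega) x
  have hxx : 0 < x ⬝ᵥ x := by simpa using Matrix.dotProduct_self_star_pos_iff.2 hx
  have hform : x ⬝ᵥ Psk β α h τ e1 e2 N *ᵥ x
      = h ^ β * c0 α τ * (x ⬝ᵥ x) - (1 - α / 2) * (e1 + e2) * (x ⬝ᵥ skG β N *ᵥ x) := by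
    simp only [Psk, skK, Matrix.sub_mulVec, Matrix.add_mulVec, Matrix.smul_mulVec,
      Matrix.one_mulVec, dotProduct_sub, dotProduct_add, dotProduct_smul,
      Matrix.dotProduct_transpose_mulVec, smul_eq_mul]
    ring
  have hσ : 0 < (1 - α / 2) * (e1 + e2) := mul_pos (by linarith) (by linarith)
  rw [hform]
  linarith [mul_pos hC hxx, mul_nonpos_of_nonneg_of_nonpos hσ.le hS]

theorem Psk_invertible (N : ℕ) (hN : 3 ≤ N)
    (β α h τ e1 e2 : ℝ) (hβ1 : 1 < β) (hβ2 : β < 2)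
    (hα0 : 0 < α) (hα1 : α < 1) (hh : 0 < h) (hτ : 0 < τ)
    (he1 : 0 < e1) (he2 : 0 < e2) :
    IsUnit (Psk β α h τ e1 e2 N) :=
  Psk_invertible_general N hN β α h τ e1 e2 hβ1 hβ2 hα1 hh hτ he1 he2
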